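/- arXiv:2010.04287 — 2 statements merged into one kernel-verified Lean document; each statement's English description precedes it below -/
import Mathlib

section
/- Let b, T > 0, let φ : [-b,0] → ℝ be a bounded measurable function with φ(0) > 0, let f : ℝ → ℝ be bounded measurable, let J ⊆ ℝ, and let g : J × ℝ → ℝ be bounded measurable such that for some constant α₀ > -1 one has g(z,x) ≥ α₀ for all z ∈ J and x ∈ ℝ. Fix jump times 0 < τ₁ < … < τ_m ≤ T and marks z₁, …, z_m ∈ J, and let S : [-b,T] → ℝ be the unique function with S = φ on [-b,0], having left limits at each τᵢ, and satisfying S(t) = φ(0) + ∫₀ᵗ f(S(u−b)) S(u) du + ∑_{i : τᵢ ≤ t} g(zᵢ, S(τᵢ−b)) · S(τᵢ−) for all t ∈ [0,T]. Then S admits the exponential representation S(t) = φ(0) · exp( ∫₀ᵗ f(S(u−b)) du + ∑_{i : τᵢ ≤ t} ln(1 + g(zᵢ, S(τᵢ−b))) ) for every t ∈ [0,T]. -/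
/-!
With `h u = f (S (u - b))` and `γ i = g (z i) (S (τ i - b))`, the path `S` solves the linear
equation `y t = y₀ + ∫₀ᵗ h y + ∑_{τ i ≤ t} γ i · y (τ i -)`; the delay plays no further role.
Between two jump times this is a Volterra equation `y t = K + ∫₀ᵗ h y`, whose solutions are
`y a · exp (∫ₐᵗ h)`, since `(y a + ∫ₐᵗ h y) · exp (-∫ₐᵗ h)` is absolutely continuous with
derivative `0` almost everywhere. At a jump time `τ` the left limit is `y a · exp (∫ₐ^τ h)`, and
the equation gives `y τ = (1 + γ) · y (τ -)`. Induction over the finitely many jump times yields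
`y t = y₀ · exp (∫₀ᵗ h) · ∏_{τ i ≤ t} (1 + γ i)`, and `1 + γ i > 0` turns the product into the
exponential of `∑ log (1 + γ i)`.
-/

open MeasureTheory Filter Set

/-- Pathwise solution of the delayed jump equation
`dS(t) = f(S(t-b)) S(t) dt + ∫_J g(z, S(t-b)) S(t-) N(dt,dz)`
on `[0,T]` with initial segment `φ` on `[-b,0]`, where the driving Poisson random
measure has atoms at times `τ i` with marks `z i`.  `Sm i` is the left limit
`S(τ i −)`. -/
def IsPathSolution (b T : ℝ) (φ f : ℝ → ℝ) (g : ℝ → ℝ → ℝ)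
    (m : ℕ) (τ z : Fin m → ℝ) (S : ℝ → ℝ) : Prop :=
  (∀ t ∈ Set.Icc (-b) (0 : ℝ), S t = φ t) ∧
  ∃ Sm : Fin m → ℝ,
    (∀ i, Filter.Tendsto S (nhdsWithin (τ i) (Set.Iio (τ i))) (nhds (Sm i))) ∧
    ∀ t ∈ Set.Icc (0 : ℝ) T,
      S t = φ 0 + (∫ u in (0 : ℝ)..t, f (S (u - b)) * S u)
        + ∑ i ∈ Finset.univ.filter (fun i => τ i ≤ t), g (z i) (S (τ i - b)) * Sm i

open Topology Finset

theorem intervalIntegrable_of_abs_le {h : ℝ → ℝ} {C : ℝ} (hh : Measurable h)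
    (hC : ∀ u, |h u| ≤ C) (a b : ℝ) : IntervalIntegrable h volume a b :=
  intervalIntegrable_const.mono_fun' hh.aestronglyMeasurable (ae_of_all _ hC)

theorem AbsolutelyContinuousOnInterval.comp_contDiff {f g : ℝ → ℝ} {a b : ℝ}
    (hf : AbsolutelyContinuousOnInterval f a b) (hg : ContDiff ℝ 1 g) :
    AbsolutelyContinuousOnInterval (g ∘ f) a b := by
  obtain ⟨R, hR⟩ := hf.exists_bound
  obtain ⟨K, hK⟩ := hg.contDiffOn.exists_lipschitzOnWith (s := Metric.closedBall 0 R)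
    one_ne_zero (convex_closedBall 0 R) (isCompact_closedBall 0 R)
  have hmaps : ∀ x ∈ uIcc a b, f x ∈ Metric.closedBall 0 R := fun x hx => by
    simpa using hR x hx
  have hlim := Filter.Tendsto.const_mul (K : ℝ) hf
  rw [mul_zero] at hlim
  refine squeeze_zero' (Eventually.of_forall fun _ => Finset.sum_nonneg fun _ _ => dist_nonneg)
    ?_ hlim
  filter_upwards [mem_inf_of_right (mem_principal_self _)] with E hE
  rw [Finset.mul_sum]
  exact Finset.sum_le_sum fun i hi =>
    hK.dist_le_mul _ (hmaps _ (hE.1 i hi).1) _ (hmaps _ (hE.1 i hi).2)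

theorem eq_mul_exp_integral_of_eq_add_integral {h y : ℝ → ℝ} {a c : ℝ}
    (hh : IntervalIntegrable h volume a c)
    (hhy : IntervalIntegrable (fun u => h u * y u) volume a c)
    (heq : ∀ t ∈ uIcc a c, y t = y a + ∫ u in a..t, h u * y u) :
    ∀ t ∈ uIcc a c, y t = y a * Real.exp (∫ u in a..t, h u) := by
  have hY : AbsolutelyContinuousOnInterval (fun x => y a + ∫ u in a..x, h u * y u) a c :=
    (LipschitzWith.const (y a)).lipschitzOnWith.absolutelyContinuousOnInterval.fun_add
      (hhy.absolutelyContinuousOnInterval_intervalIntegral left_mem_uIcc)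
  have hE : AbsolutelyContinuousOnInterval (Real.exp ∘ fun x => -∫ u in a..x, h u) a c :=
    (hh.absolutelyContinuousOnInterval_intervalIntegral left_mem_uIcc).fun_neg.comp_contDiff
      Real.contDiff_exp
  obtain ⟨K, hK⟩ := (hY.fun_mul hE).const_of_ae_hasDerivAt_zero (by
    filter_upwards [hhy.ae_hasDerivAt_integral, hh.ae_hasDerivAt_integral] with x hyx hx hmem
    refine (((hyx hmem a left_mem_uIcc).const_add (y a)).mul
      (hx hmem a left_mem_uIcc).neg.exp).congr_deriv ?_
    rw [← heq x hmem]
    ring)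
  intro t ht
  have hKt := hK t ht
  simp only [Function.comp_apply] at hK hKt
  rw [← hK a left_mem_uIcc, intervalIntegral.integral_same, intervalIntegral.integral_same,
    add_zero, neg_zero, Real.exp_zero, mul_one, ← heq t ht, Real.exp_neg] at hKt
  rw [← hKt, mul_assoc, inv_mul_cancel₀ (Real.exp_pos _).ne', mul_one]

theorem eq_mul_exp_integral_of_eq_const_add_integral {h y : ℝ → ℝ} {K p a b : ℝ}
    (hab : a ≤ b) (hh : IntervalIntegrable h volume a b)
    (hpa : IntervalIntegrable (fun u => h u * y u) volume p a)
    (hiab : IntervalIntegrable (fun u => h u * y u) volume a b)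
    (heq : ∀ t ∈ Icc a b, y t = K + ∫ u in p..t, h u * y u) :
    y b = y a * Real.exp (∫ u in a..b, h u) := by
  refine eq_mul_exp_integral_of_eq_add_integral hh hiab (fun t ht => ?_) b right_mem_uIcc
  rw [uIcc_of_le hab] at ht
  rw [heq t ht, heq a (left_mem_Icc.2 hab), add_assoc,
    intervalIntegral.integral_add_adjacent_intervals hpa (hiab.mono_set ?_)]
  rw [uIcc_of_le hab, uIcc_of_le ht.1]
  exact Icc_subset_Icc_right ht.2

theorem intervalIntegrable_mul_of_eq_const_add_integral {h y : ℝ → ℝ} {C K p a c : ℝ}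
    (hac : a ≤ c) (hh : Measurable h) (hy : Measurable y) (hC : ∀ u, |h u| ≤ C)
    (hpa : IntervalIntegrable (fun u => h u * y u) volume p a)
    (heq : ∀ t ∈ Ico a c, y t = K + ∫ u in p..t, h u * y u) :
    IntervalIntegrable (fun u => h u * y u) volume p c := by
  have hC0 : 0 ≤ C := (abs_nonneg _).trans (hC 0)
  set B := max (|y a| * Real.exp (C * (c - a))) |K|
  -- Where `h * y` fails to be integrable the integral is `0`, and then `y = K` is bounded anyway.
  have hbound : ∀ t ∈ Ico a c, |y t| ≤ B := by
    intro t ht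
    by_cases hpt : IntervalIntegrable (fun u => h u * y u) volume p t
    · rw [eq_mul_exp_integral_of_eq_const_add_integral ht.1 (intervalIntegrable_of_abs_le hh hC _ _)
        hpa (hpa.symm.trans hpt) fun s hs => heq s ⟨hs.1, hs.2.trans_lt ht.2⟩]
      refine le_max_of_le_left ?_
      rw [abs_mul, Real.abs_exp]
      gcongr
      calc ∫ u in a..t, h u ≤ C * |t - a| :=
            (le_abs_self _).trans
              (intervalIntegral.norm_integral_le_of_norm_le_const (f := h) fun u _ => hC u)
        _ ≤ C * (c - a) := by
            rw [abs_of_nonneg (sub_nonneg.2 ht.1)]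
            gcongr
            exact ht.2.le
    · rw [heq t ht, intervalIntegral.integral_undef hpt, add_zero]
      exact le_max_right _ _
  refine hpa.trans ?_
  rw [intervalIntegrable_iff_integrableOn_Ioo_of_le hac]
  refine Measure.integrableOn_of_bounded (M := C * B) measure_Ioo_lt_top.ne
    (hh.mul hy).aestronglyMeasurable (ae_restrict_of_forall_mem measurableSet_Ioo fun u hu => ?_)
  rw [Real.norm_eq_abs, abs_mul]
  exact mul_le_mul (hC u) (hbound u (Ioo_subset_Ico_self hu)) (abs_nonneg _) hC0

theorem tendsto_nhdsLT_of_eqOn_Ico {E : Type*} [TopologicalSpace E] {f g : ℝ → E} {a c : ℝ}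
    (hac : a < c) (hfg : EqOn f g (Ico a c)) (hg : ContinuousWithinAt g (Icc a c) c) :
    Tendsto f (𝓝[<] c) (𝓝 (g c)) := by
  rw [← nhdsWithin_Ico_eq_nhdsLT hac]
  exact (hg.mono Ico_subset_Icc_self).congr'
    (eventually_nhdsWithin_of_forall fun x hx => (hfg hx).symm)

theorem prod_one_add_of_subsingleton {ι R : Type*} [CommSemiring R] {s : Finset ι}
    (hs : (s : Set ι).Subsingleton) (f : ι → R) : ∏ i ∈ s, (1 + f i) = 1 + ∑ i ∈ s, f i := by
  obtain h | ⟨k, h⟩ := hs.eq_empty_or_singleton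
  · simp [Finset.coe_eq_empty.1 h]
  · simp [Finset.coe_eq_singleton.1 h]

section Jumps

variable {ι : Type*} [Fintype ι]

@[to_additive]
theorem prod_filter_le_eq_mul {M : Type*} [CommMonoid M] (τ : ι → ℝ) (f : ι → M) {a t : ℝ}
    (hat : a ≤ t) :
    ∏ i ∈ univ.filter (fun i => τ i ≤ t), f i =
      (∏ i ∈ univ.filter (fun i => τ i ≤ a), f i) *
        ∏ i ∈ univ.filter (fun i => τ i ∈ Ioc a t), f i := by
  rw [← Finset.prod_filter_mul_prod_filter_not (univ.filter fun i => τ i ≤ t) (fun i => τ i ≤ a),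
    Finset.filter_filter, Finset.filter_filter]
  congr 1 <;> refine Finset.prod_congr (Finset.filter_congr fun i _ => ?_) fun _ _ => rfl
  · exact ⟨And.right, fun hia => ⟨hia.trans hat, hia⟩⟩
  · rw [Set.mem_Ioc, not_le, and_comm]

theorem exists_forall_notMem_Ioo (τ : ι → ℝ) {t : ℝ} (ht : 0 < t) :
    ∃ a ∈ Ico 0 t, (∀ i, τ i ∉ Ioo a t) ∧
      (a = 0 ∨ #(univ.filter fun i => τ i < a) < #(univ.filter fun i => τ i < t)) := by
  by_cases hne : ∃ j, τ j ∈ Ioo 0 t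
  · obtain ⟨j, hj, hjmax⟩ := (univ.filter fun i => τ i ∈ Ioo 0 t).exists_max_image τ
      (by simpa [Finset.filter_nonempty_iff] using hne)
    rw [Finset.mem_filter] at hj
    refine ⟨τ j, ⟨hj.2.1.le, hj.2.2⟩, fun i hi => ?_, Or.inr ?_⟩
    · exact not_lt.2 (hjmax i (by simp [hi.2, hj.2.1.trans hi.1])) hi.1
    · refine Finset.card_lt_card ((Finset.ssubset_iff_of_subset ?_).2 ⟨j, ?_, ?_⟩)
      · intro i hi
        simp only [Finset.mem_filter, Finset.mem_univ, true_and] at hi ⊢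
        exact hi.trans hj.2.2
      · simpa using hj.2.2
      · simp
  · exact ⟨0, ⟨le_rfl, ht⟩, fun i hi => hne ⟨i, hi⟩, Or.inl rfl⟩

noncomputable def linearJumpSolution (y₀ : ℝ) (h : ℝ → ℝ) (τ γ : ι → ℝ) (t : ℝ) : ℝ :=
  y₀ * Real.exp (∫ u in (0 : ℝ)..t, h u) * ∏ i ∈ univ.filter (fun i => τ i ≤ t), (1 + γ i)

theorem linearJumpSolution_eq_mul {y₀ : ℝ} {h : ℝ → ℝ} {τ γ : ι → ℝ} {a t : ℝ}
    (hat : a ≤ t) (hi0a : IntervalIntegrable h volume 0 a)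
    (hiat : IntervalIntegrable h volume a t) :
    linearJumpSolution y₀ h τ γ t = linearJumpSolution y₀ h τ γ a *
      Real.exp (∫ u in a..t, h u) * ∏ i ∈ univ.filter (fun i => τ i ∈ Ioc a t), (1 + γ i) := by
  rw [linearJumpSolution, linearJumpSolution, prod_filter_le_eq_mul τ _ hat,
    ← intervalIntegral.integral_add_adjacent_intervals hi0a hiat, Real.exp_add]
  ring

variable {h y : ℝ → ℝ} {C y₀ T : ℝ} {τ γ ym : ι → ℝ}

theorem eq_linearJumpSolution_extend (hτ : Function.Injective τ) (hh : Measurable h)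
    (hy : Measurable y) (hC : ∀ u, |h u| ≤ C)
    (hlim : ∀ i, Tendsto y (𝓝[<] τ i) (𝓝 (ym i)))
    (heq : ∀ t ∈ Icc 0 T, y t = y₀ + (∫ u in (0 : ℝ)..t, h u * y u)
      + ∑ i ∈ univ.filter (fun i => τ i ≤ t), γ i * ym i)
    {a c : ℝ} (ha : 0 ≤ a) (hac : a < c) (hcT : c ≤ T) (hgap : ∀ i, τ i ∉ Ioo a c)
    (hia : IntervalIntegrable (fun u => h u * y u) volume 0 a)
    (hya : ∀ s ∈ Icc 0 a, y s = linearJumpSolution y₀ h τ γ s) :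
    IntervalIntegrable (fun u => h u * y u) volume 0 c ∧
      ∀ s ∈ Icc 0 c, y s = linearJumpSolution y₀ h τ γ s := by
  have hint : ∀ a b, IntervalIntegrable h volume a b := intervalIntegrable_of_abs_le hh hC
  have hnojump : ∀ t ∈ Ico a c, univ.filter (fun i => τ i ∈ Ioc a t) = ∅ := fun t ht =>
    Finset.filter_eq_empty_iff.2 fun i _ hi => hgap i ⟨hi.1, hi.2.trans_lt ht.2⟩
  obtain ⟨K, hK⟩ : ∃ K, K = y₀ + ∑ i ∈ univ.filter (fun i => τ i ≤ a), γ i * ym i := ⟨_, rfl⟩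
  have heqK : ∀ t ∈ Ico a c, y t = K + ∫ u in (0 : ℝ)..t, h u * y u := fun t ht => by
    rw [heq t ⟨ha.trans ht.1, ht.2.le.trans hcT⟩, sum_filter_le_eq_add τ _ ht.1, hnojump t ht,
      Finset.sum_empty, hK]
    ring
  have hic := intervalIntegrable_mul_of_eq_const_add_integral hac.le hh hy hC hia heqK
  set G := fun t => linearJumpSolution y₀ h τ γ a * Real.exp (∫ u in a..t, h u)
  have hyG : EqOn y G (Ico a c) := fun t ht => by
    rw [eq_mul_exp_integral_of_eq_const_add_integral ht.1 (hint a t) hia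
      ((hia.symm.trans hic).mono_set ?_) fun s hs => heqK s ⟨hs.1, hs.2.trans_lt ht.2⟩,
      hya a ⟨ha, le_rfl⟩]
    rw [uIcc_of_le ht.1, uIcc_of_le hac.le]
    exact Icc_subset_Icc_right ht.2.le
  have hFG : ∀ t ∈ Icc a c, linearJumpSolution y₀ h τ γ t =
      G t * ∏ i ∈ univ.filter (fun i => τ i ∈ Ioc a t), (1 + γ i) := fun t ht =>
    linearJumpSolution_eq_mul ht.1 (hint 0 a) (hint a t)
  have hlimG : Tendsto y (𝓝[<] c) (𝓝 (G c)) :=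
    tendsto_nhdsLT_of_eqOn_Ico hac hyG (continuous_const.mul (Real.continuous_exp.comp
      (intervalIntegral.continuous_primitive hint a))).continuousWithinAt
  -- Both `K + ∫₀ᵗ h y` and `G` are continuous at `c` and agree with `y` just left of `c`.
  have hYc : K + ∫ u in (0 : ℝ)..c, h u * y u = G c := by
    refine tendsto_nhds_unique (tendsto_nhdsLT_of_eqOn_Ico hac (f := y)
      (g := fun t => K + ∫ u in (0 : ℝ)..t, h u * y u) heqK ?_) hlimG
    refine (continuousWithinAt_const.add ((intervalIntegral.continuousOn_primitive_interval' hic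
      left_mem_uIcc).continuousWithinAt right_mem_uIcc)).mono ?_
    rw [uIcc_of_le (ha.trans hac.le)]
    exact Icc_subset_Icc_left ha
  have hτc : ∀ i ∈ univ.filter (fun i => τ i ∈ Ioc a c), τ i = c := fun i hi => by
    rw [Finset.mem_filter] at hi
    exact hi.2.2.eq_or_lt.resolve_right fun hlt => hgap i ⟨hi.2.1, hlt⟩
  have hjumps : ((univ.filter fun i => τ i ∈ Ioc a c) : Set ι).Subsingleton :=
    fun i hi j hj => hτ ((hτc i hi).trans (hτc j hj).symm)
  have hjumpsum : ∑ i ∈ univ.filter (fun i => τ i ∈ Ioc a c), γ i * ym i =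
      (∑ i ∈ univ.filter (fun i => τ i ∈ Ioc a c), γ i) * G c := by
    rw [Finset.sum_mul]
    refine Finset.sum_congr rfl fun i hi => ?_
    rw [tendsto_nhds_unique (hlim i) (by rw [hτc i hi]; exact hlimG)]
  have hyc : y c = linearJumpSolution y₀ h τ γ c := by
    rw [heq c ⟨ha.trans hac.le, hcT⟩, sum_filter_le_eq_add τ _ hac.le, hjumpsum,
      hFG c ⟨hac.le, le_rfl⟩, prod_one_add_of_subsingleton hjumps, ← hYc, hK]
    ring
  refine ⟨hic, fun s hs => ?_⟩
  rcases le_or_gt s a with hsa | has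
  · exact hya s ⟨hs.1, hsa⟩
  rcases hs.2.lt_or_eq with hsc | rfl
  · rw [hyG ⟨has.le, hsc⟩, hFG s ⟨has.le, hs.2⟩, hnojump s ⟨has.le, hsc⟩, Finset.prod_empty,
      mul_one]
  · exact hyc

theorem eq_linearJumpSolution (hτ : Function.Injective τ) (hτpos : ∀ i, 0 < τ i)
    (hh : Measurable h) (hy : Measurable y) (hC : ∀ u, |h u| ≤ C)
    (hlim : ∀ i, Tendsto y (𝓝[<] τ i) (𝓝 (ym i)))
    (heq : ∀ t ∈ Icc 0 T, y t = y₀ + (∫ u in (0 : ℝ)..t, h u * y u)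
      + ∑ i ∈ univ.filter (fun i => τ i ≤ t), γ i * ym i) :
    ∀ t ∈ Icc 0 T, y t = linearJumpSolution y₀ h τ γ t := by
  have hnojump : univ.filter (fun i => τ i ≤ 0) = ∅ :=
    Finset.filter_eq_empty_iff.2 fun i _ => not_le.2 (hτpos i)
  have hbase (hT : 0 ≤ T) : IntervalIntegrable (fun u => h u * y u) volume 0 0 ∧
      ∀ s ∈ Icc (0 : ℝ) 0, y s = linearJumpSolution y₀ h τ γ s := by
    refine ⟨IntervalIntegrable.refl, fun s hs => ?_⟩
    obtain rfl : s = 0 := le_antisymm hs.2 hs.1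
    rw [heq 0 ⟨le_rfl, hT⟩, linearJumpSolution, hnojump, intervalIntegral.integral_same,
      intervalIntegral.integral_same, Finset.sum_empty, Finset.prod_empty, Real.exp_zero]
    ring
  suffices ∀ n, ∀ t ∈ Icc 0 T, #(univ.filter fun i => τ i < t) = n →
      IntervalIntegrable (fun u => h u * y u) volume 0 t ∧
        ∀ s ∈ Icc 0 t, y s = linearJumpSolution y₀ h τ γ s from
    fun t ht => (this _ t ht rfl).2 t ⟨ht.1, le_rfl⟩
  intro n
  induction n using Nat.strong_induction_on with
  | _ n ih =>
    intro t ht hn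
    have hT := ht.1.trans ht.2
    rcases ht.1.eq_or_lt with rfl | htpos
    · exact hbase hT
    obtain ⟨a, ha, hgap, ha'⟩ := exists_forall_notMem_Ioo τ htpos
    obtain ⟨hia, hya⟩ : IntervalIntegrable (fun u => h u * y u) volume 0 a ∧
        ∀ s ∈ Icc 0 a, y s = linearJumpSolution y₀ h τ γ s := by
      rcases ha' with rfl | hlt
      · exact hbase hT
      · exact ih _ (hn ▸ hlt) a ⟨ha.1, ha.2.le.trans ht.2⟩ rfl
    exact eq_linearJumpSolution_extend hτ hh hy hC hlim heq ha.1 ha.2 ht.2 hgap hia hya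

end Jumps

theorem stmt_1_general (b T : ℝ)
    (φ : ℝ → ℝ) (f : ℝ → ℝ) (hfm : Measurable f) (hfb : ∃ C, ∀ x, |f x| ≤ C)
    (J : Set ℝ) (g : ℝ → ℝ → ℝ)
    (α₀ : ℝ) (hα₀ : -1 < α₀) (hg : ∀ zz ∈ J, ∀ x : ℝ, α₀ ≤ g zz x)
    (m : ℕ) (τ z : Fin m → ℝ) (hτmono : StrictMono τ)
    (hτpos : ∀ i, 0 < τ i) (hz : ∀ i, z i ∈ J)
    (S : ℝ → ℝ) (hSm : Measurable S) (hS : IsPathSolution b T φ f g m τ z S) :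
    ∀ t ∈ Set.Icc (0 : ℝ) T,
      S t = φ 0 * Real.exp ((∫ u in (0 : ℝ)..t, f (S (u - b)))
        + ∑ i ∈ Finset.univ.filter (fun i => τ i ≤ t),
            Real.log (1 + g (z i) (S (τ i - b)))) := by
  obtain ⟨C, hC⟩ := hfb
  obtain ⟨-, Sm, hlim, heq⟩ := hS
  intro t ht
  rw [eq_linearJumpSolution hτmono.injective hτpos (hfm.comp (hSm.comp (measurable_sub_const b)))
    hSm (fun u => hC _) hlim heq t ht, linearJumpSolution, Real.exp_add, Real.exp_sum, mul_assoc]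
  congr 2
  refine Finset.prod_congr rfl fun i _ => (Real.exp_log ?_).symm
  linarith [hg (z i) (hz i) (S (τ i - b))]

/-- Exponential representation of the pathwise solution of the delayed jump equation. -/
theorem stmt_1 (b T : ℝ) (hb : 0 < b) (hT : 0 < T)
    (φ : ℝ → ℝ) (hφm : Measurable φ) (hφb : ∃ C, ∀ t ∈ Set.Icc (-b) (0 : ℝ), |φ t| ≤ C)
    (hφ0 : 0 < φ 0)
    (f : ℝ → ℝ) (hfm : Measurable f) (hfb : ∃ C, ∀ x, |f x| ≤ C)
    (J : Set ℝ) (g : ℝ → ℝ → ℝ)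
    (hgm : Measurable fun pr : ℝ × ℝ => g pr.1 pr.2)
    (hgb : ∃ C, ∀ zz x, |g zz x| ≤ C)
    (α₀ : ℝ) (hα₀ : -1 < α₀) (hg : ∀ zz ∈ J, ∀ x : ℝ, α₀ ≤ g zz x)
    (m : ℕ) (τ z : Fin m → ℝ) (hτmono : StrictMono τ)
    (hτpos : ∀ i, 0 < τ i) (hτT : ∀ i, τ i ≤ T) (hz : ∀ i, z i ∈ J)
    (S : ℝ → ℝ) (hSm : Measurable S) (hS : IsPathSolution b T φ f g m τ z S) :
    ∀ t ∈ Set.Icc (0 : ℝ) T,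
      S t = φ 0 * Real.exp ((∫ u in (0 : ℝ)..t, f (S (u - b)))
        + ∑ i ∈ Finset.univ.filter (fun i => τ i ≤ t),
            Real.log (1 + g (z i) (S (τ i - b)))) :=
  stmt_1_general b T φ f hfm hfb J g α₀ hα₀ hg m τ z hτmono hτpos hz S hSm hS
end

section
/- Let b > 0, let φ : [-b,0] → ℝ be bounded measurable with φ(0) > 0, let f : ℝ → ℝ be bounded measurable, and let g : ℝ → ℝ be measurable with 0 ≤ g(x) ≤ α₀/R for all x ∈ ℝ, for some constant α₀ ∈ (0,1). Then almost surely there exists exactly one solution S of the delayed jump equation driven by the compound Poisson process Z, and this solution satisfies S(t) > 0 for every t ∈ [0,T]. -/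
open MeasureTheory ProbabilityTheory Filter Set

/-- Pathwise solution of the delayed jump equation
`dS(t) = f(S(t-b)) S(t) dt + g(S(t-b)) S(t-) dZ(t)` driven by a compound Poisson
process with jump times `τ` and jump sizes `Y`.  `Sm i` is the left limit `S(τ i −)`. -/
def IsSolution (b T : ℝ) (φ f g : ℝ → ℝ) (τ Y : ℕ → ℝ) (S : ℝ → ℝ) : Prop :=
  (∀ t ∈ Set.Icc (-b) (0 : ℝ), S t = φ t) ∧
  ∃ Sm : ℕ → ℝ,
    (∀ i, τ i ≤ T → Filter.Tendsto S (nhdsWithin (τ i) (Set.Iio (τ i))) (nhds (Sm i))) ∧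
    ∀ t ∈ Set.Icc (0 : ℝ) T,
      S t = φ 0 + (∫ u in (0 : ℝ)..t, f (S (u - b)) * S u)
        + ∑' i : ℕ, if τ i ≤ t then g (S (τ i - b)) * Y i * Sm i else 0

/-!
Almost surely the jump times `τ i = E 0 + ⋯ + E i` are positive, strictly increasing and tend to
infinity (strong law of large numbers for the bounded variables `min (E i) 1`), and every jump
size is at least `-R`, so every jump factor `1 + g x * Y i` is at least `1 - α₀ > 0`. On such a
path the equation is solved by the method of steps: on `[0, T]`,
`S t = φ 0 * exp (∫₀ᵗ f (S (u - b)) du) * ∏_{τ i ≤ t} (1 + g (S (τ i - b)) * Y i)`,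
and the right-hand side only reads `S` on `(-∞, t - b]`, so finitely many iterations of it
starting from `φ` reach a fixed point on `(-∞, T]`, which is positive because every factor is.
That the formula solves the equation is the fundamental theorem of calculus for the absolutely
continuous function `t ↦ exp (∫₀ᵗ f (S (u - b)) du)`, applied between consecutive jumps.

For uniqueness, Grönwall's inequality first shows that the drift `f (S (u - b)) * S u` of any
measurable solution is integrable: where it is not, its integral is the junk value `0` and the
equation bounds `S` directly. Two solutions agreeing before some time then agree on a short
interval after it, shorter than the delay and containing no new jump, again by Grönwall.
-/

open intervalIntegral Finset Real
open scoped NNReal ENNReal Topology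

theorem LipschitzOnWith.comp_absolutelyContinuousOnInterval {f g : ℝ → ℝ} {K : ℝ≥0}
    {s : Set ℝ} {a b : ℝ} (hg : LipschitzOnWith K g s)
    (hf : AbsolutelyContinuousOnInterval f a b) (hfs : MapsTo f (uIcc a b) s) :
    AbsolutelyContinuousOnInterval (g ∘ f) a b := by
  rw [absolutelyContinuousOnInterval_iff] at hf ⊢
  intro ε hε
  obtain ⟨δ, hδ, hfδ⟩ := hf (ε / (K + 1)) (by positivity)
  refine ⟨δ, hδ, fun E hE hlen => ?_⟩
  calc ∑ i ∈ range E.1, dist (g (f (E.2 i).1)) (g (f (E.2 i).2))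
      ≤ ∑ i ∈ range E.1, K * dist (f (E.2 i).1) (f (E.2 i).2) :=
        sum_le_sum fun i hi => hg.dist_le_mul _ (hfs (hE.1 i hi).1) _ (hfs (hE.1 i hi).2)
    _ = K * ∑ i ∈ range E.1, dist (f (E.2 i).1) (f (E.2 i).2) := (mul_sum ..).symm
    _ ≤ K * (ε / (K + 1)) := by gcongr; exact (hfδ E hE hlen).le
    _ < ε := by
      rw [mul_div_assoc', div_lt_iff₀ (by positivity)]
      nlinarith

theorem lipschitzOnWith_exp_Iic (M : ℝ) : LipschitzOnWith ‖exp M‖₊ exp (Iic M) :=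
  (convex_Iic M).lipschitzOnWith_of_nnnorm_deriv_le (fun _ _ => differentiableAt_exp)
    fun x hx => by
      rw [Real.deriv_exp, ← NNReal.coe_le_coe, coe_nnnorm, coe_nnnorm,
        norm_of_nonneg (exp_pos x).le, norm_of_nonneg (exp_pos M).le]
      exact exp_le_exp.2 hx

theorem integral_mul_exp_integral_eq_exp_sub_one {a : ℝ → ℝ} {s t : ℝ}
    (ha : IntervalIntegrable a volume s t) :
    ∫ u in s..t, a u * exp (∫ x in s..u, a x) = exp (∫ x in s..t, a x) - 1 := by
  have hA := ha.absolutelyContinuousOnInterval_intervalIntegral (c := s) left_mem_uIcc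
  obtain ⟨M, hM⟩ := hA.exists_bound
  have hexpA : AbsolutelyContinuousOnInterval (fun u => exp (∫ x in s..u, a x)) s t :=
    (lipschitzOnWith_exp_Iic M).comp_absolutelyContinuousOnInterval hA
      fun u hu => (le_abs_self _).trans (hM u hu)
  have hs : exp (∫ x in s..s, a x) = 1 := by simp
  rw [← hs, ← hexpA.integral_deriv_eq_sub]
  refine integral_congr_ae ?_
  filter_upwards [ha.ae_hasDerivAt_integral] with u hu hmem
  rw [((hu (uIoc_subset_uIcc hmem) s left_mem_uIcc).exp).deriv, mul_comm]

theorem integral_mul_exp_integral_eq_sub {a : ℝ → ℝ}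
    (ha : ∀ s t, IntervalIntegrable a volume s t) (c s t : ℝ) :
    ∫ u in s..t, a u * exp (∫ x in c..u, a x) =
      exp (∫ x in c..t, a x) - exp (∫ x in c..s, a x) := by
  have hsplit : ∀ u, ∫ x in c..u, a x = (∫ x in c..s, a x) + ∫ x in s..u, a x := fun u =>
    (integral_add_adjacent_intervals (ha c s) (ha s u)).symm
  calc ∫ u in s..t, a u * exp (∫ x in c..u, a x)
      = ∫ u in s..t, exp (∫ x in c..s, a x) * (a u * exp (∫ x in s..u, a x)) :=
        integral_congr fun u _ => by rw [hsplit u, exp_add]; ring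
    _ = exp (∫ x in c..t, a x) - exp (∫ x in c..s, a x) := by
        rw [intervalIntegral.integral_const_mul, integral_mul_exp_integral_eq_exp_sub_one (ha s t),
          hsplit t, exp_add]
        ring

theorem mul_integral_pow_div_factorial (C s u : ℝ) (k : ℕ) :
    C * ∫ r in s..u, (C * (r - s)) ^ k / k.factorial =
      (C * (u - s)) ^ (k + 1) / (k + 1).factorial := by
  simp_rw [mul_pow, mul_div_right_comm _ ((_ : ℝ) ^ k)]
  rw [intervalIntegral.integral_const_mul, integral_comp_sub_right (fun r => r ^ k), integral_pow,
    Nat.factorial_succ]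
  push_cast
  field_simp
  ring

theorem le_sum_pow_div_factorial_of_le_add_integral {v : ℝ → ℝ} {s t A C : ℝ} (hC : 0 ≤ C)
    (hv0 : ∀ u ∈ Icc s t, 0 ≤ v u) (hint : IntervalIntegrable v volume s t)
    (hv : ∀ u ∈ Icc s t, v u ≤ A + C * ∫ r in s..u, v r) (n : ℕ) :
    ∀ u ∈ Icc s t, v u ≤ A * ∑ k ∈ range n, (C * (u - s)) ^ k / k.factorial +
      (A + C * ∫ r in s..t, v r) * ((C * (u - s)) ^ n / n.factorial) := by
  set p : ℕ → ℝ → ℝ := fun k r => (C * (r - s)) ^ k / k.factorial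
  set K := A + C * ∫ r in s..t, v r
  change ∀ u ∈ Icc s t, v u ≤ A * ∑ k ∈ range n, p k u + K * p n u
  induction n with
  | zero =>
    intro u hu
    have : ∫ r in s..u, v r ≤ ∫ r in s..t, v r :=
      integral_mono_interval le_rfl hu.1 hu.2
        ((ae_restrict_iff' measurableSet_Ioc).2 (ae_of_all _ fun r hr => hv0 r ⟨hr.1.le, hr.2⟩))
        hint
    simpa [p, K] using (hv u hu).trans (by gcongr)
  | succ n ih =>
    intro u hu
    have hvint : IntervalIntegrable v volume s u := hint.mono_set <| by
      rw [uIcc_of_le hu.1, uIcc_of_le (hu.1.trans hu.2)]; exact Icc_subset_Icc_right hu.2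
    have hpint : ∀ k, IntervalIntegrable (p k) volume s u := fun k =>
      (by fun_prop : Continuous (p k)).intervalIntegrable s u
    have hsumint : IntervalIntegrable (fun r => A * ∑ k ∈ range n, p k r) volume s u :=
      (by fun_prop : Continuous fun r => A * ∑ k ∈ range n, p k r).intervalIntegrable s u
    have hbound : ∫ r in s..u, v r ≤ ∫ r in s..u, (A * ∑ k ∈ range n, p k r + K * p n r) :=
      integral_mono_on hu.1 hvint (hsumint.add ((hpint n).const_mul K))
        fun r hr => ih r ⟨hr.1, hr.2.trans hu.2⟩
    calc v u ≤ A + C * ∫ r in s..u, v r := hv u hu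
      _ ≤ A + C * ∫ r in s..u, (A * ∑ k ∈ range n, p k r + K * p n r) := by gcongr
      _ = A * ∑ k ∈ range (n + 1), p k u + K * p (n + 1) u := by
        rw [integral_add hsumint ((hpint n).const_mul K), intervalIntegral.integral_const_mul,
          intervalIntegral.integral_const_mul, integral_finsetSum fun k _ => hpint k,
          mul_add, mul_left_comm, mul_sum, mul_left_comm C K, sum_range_succ']
        simp only [p, mul_integral_pow_div_factorial]
        simp
        ring

theorem le_mul_exp_of_le_add_integral {v : ℝ → ℝ} {s t A C : ℝ} (hC : 0 ≤ C)
    (hv0 : ∀ u ∈ Icc s t, 0 ≤ v u) (hint : IntervalIntegrable v volume s t)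
    (hv : ∀ u ∈ Icc s t, v u ≤ A + C * ∫ r in s..u, v r) {u : ℝ} (hu : u ∈ Icc s t) :
    v u ≤ A * exp (C * (u - s)) := by
  have hst : s ≤ t := hu.1.trans hu.2
  have hA : 0 ≤ A := by simpa using (hv0 s ⟨le_rfl, hst⟩).trans (hv s ⟨le_rfl, hst⟩)
  set K := A + C * ∫ r in s..t, v r
  have hlim : Tendsto (fun n => A * exp (C * (u - s)) + K * ((C * (u - s)) ^ n / n.factorial))
      atTop (𝓝 (A * exp (C * (u - s)))) := by
    simpa using ((FloorSemiring.tendsto_pow_div_factorial_atTop (C * (u - s))).const_mul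
      K).const_add (A * exp (C * (u - s)))
  refine ge_of_tendsto' hlim fun n =>
    (le_sum_pow_div_factorial_of_le_add_integral hC hv0 hint hv n u hu).trans ?_
  gcongr
  exact sum_le_exp_of_nonneg (mul_nonneg hC (sub_nonneg.2 hu.1)) n

theorem eq_zero_of_eq_integral {D w : ℝ → ℝ} {s t C : ℝ} (hC : 0 ≤ C) (hst : s ≤ t)
    (hw : IntervalIntegrable w volume s t) (hD : ∀ u ∈ Icc s t, D u = ∫ r in s..u, w r)
    (hwD : ∀ u ∈ Icc s t, |w u| ≤ C * |D u|) : D t = 0 := by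
  have hzero : ∀ u ∈ Icc s t, |w u| ≤ 0 := fun u hu => by
    have := le_mul_exp_of_le_add_integral (v := fun u => |w u|) (A := 0) hC
      (fun _ _ => abs_nonneg _) hw.abs (fun r hr => ?_) hu
    · simpa using this
    calc |w r| ≤ C * |D r| := hwD r hr
      _ ≤ 0 + C * ∫ q in s..r, |w q| := by
        rw [zero_add, hD r hr]
        exact mul_le_mul_of_nonneg_left (abs_integral_le_integral_abs hr.1) hC
  rw [hD t ⟨hst, le_rfl⟩]
  refine (integral_congr (g := fun _ => (0 : ℝ)) fun r hr => ?_).trans integral_zero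
  rw [uIcc_of_le hst] at hr
  exact abs_nonpos_iff.1 (hzero r hr)

theorem intervalIntegrable_of_le_add_integral {v : ℝ → ℝ} {s t A C : ℝ} (hm : Measurable v)
    (hC : 0 ≤ C) (hst : s ≤ t) (hv0 : ∀ u ∈ Icc s t, 0 ≤ v u)
    (hv : ∀ u ∈ Icc s t, v u ≤ A + C * ∫ r in s..u, v r) :
    IntervalIntegrable v volume s t := by
  have hbound : ∀ u ∈ Icc s t, v u ≤ |A| * exp (C * (t - s)) := by
    intro u hu
    have hexp : 1 ≤ exp (C * (t - s)) := one_le_exp (mul_nonneg hC (sub_nonneg.2 hst))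
    by_cases hint : IntervalIntegrable v volume s u
    · calc v u ≤ A * exp (C * (u - s)) :=
            le_mul_exp_of_le_add_integral hC (fun r hr => hv0 r ⟨hr.1, hr.2.trans hu.2⟩) hint
              (fun r hr => hv r ⟨hr.1, hr.2.trans hu.2⟩) ⟨hu.1, le_rfl⟩
        _ ≤ |A| * exp (C * (t - s)) := by gcongr; exacts [le_abs_self A, hu.2]
    · -- the integral is the junk value `0`
      have := hv u hu
      rw [integral_undef hint, mul_zero, add_zero] at this
      nlinarith [le_abs_self A, abs_nonneg A]
  refine (intervalIntegrable_const (c := |A| * exp (C * (t - s)))).mono_fun'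
    hm.aestronglyMeasurable ?_
  filter_upwards [ae_restrict_mem measurableSet_uIoc] with u hu
  rw [uIoc_of_le hst] at hu
  have hu' : u ∈ Icc s t := Ioc_subset_Icc_self hu
  rw [norm_of_nonneg (hv0 u hu')]
  exact hbound u hu'

theorem intervalIntegrable_of_abs_le_s2 {h : ℝ → ℝ} (hm : Measurable h) {C : ℝ}
    (hC : ∀ x, |h x| ≤ C) (s t : ℝ) : IntervalIntegrable h volume s t :=
  (intervalIntegrable_const (c := C)).mono_fun' hm.aestronglyMeasurable (ae_of_all _ hC)

noncomputable def jumpProd (τ γ : ℕ → ℝ) (n : ℕ) (t : ℝ) : ℝ :=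
  ∏ i ∈ range n, if τ i ≤ t then 1 + γ i else 1

noncomputable def jumpProdLeft (τ γ : ℕ → ℝ) (n : ℕ) (t : ℝ) : ℝ :=
  ∏ i ∈ range n, if τ i < t then 1 + γ i else 1

section jumpProd

variable {τ γ : ℕ → ℝ} {n : ℕ}

theorem measurable_jumpProd : Measurable (jumpProd τ γ n) :=
  Finset.measurable_prod _ fun _ _ =>
    Measurable.ite measurableSet_Ici measurable_const measurable_const

theorem abs_jumpProd_le (t : ℝ) : |jumpProd τ γ n t| ≤ ∏ i ∈ range n, max |1 + γ i| 1 := by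
  rw [jumpProd, abs_prod]
  refine prod_le_prod (fun i _ => abs_nonneg _) fun _ _ => ?_
  split_ifs <;> simp

theorem jumpProd_pos (hγ : ∀ i, 0 < 1 + γ i) (t : ℝ) : 0 < jumpProd τ γ n t :=
  prod_pos fun i _ => by split_ifs; exacts [hγ i, one_pos]

theorem jumpProd_eq_one {t : ℝ} (ht : ∀ i < n, t < τ i) : jumpProd τ γ n t = 1 :=
  prod_eq_one fun i hi => if_neg (not_le.2 (ht i (mem_range.1 hi)))

theorem jumpProd_eventuallyEq (s : ℝ) :
    jumpProd τ γ n =ᶠ[𝓝[<] s] fun _ => jumpProdLeft τ γ n s := by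
  have : ∀ i ∈ range n, ∀ᶠ u in 𝓝[<] s,
      (if τ i ≤ u then 1 + γ i else 1) = if τ i < s then 1 + γ i else 1 := by
    intro i _
    by_cases hi : τ i < s
    · filter_upwards [Ioo_mem_nhdsLT hi] with u hu
      rw [if_pos hu.1.le, if_pos hi]
    · filter_upwards [self_mem_nhdsWithin] with u (hu : u < s)
      rw [if_neg (fun h => hi (h.trans_lt hu)), if_neg hi]
  filter_upwards [(Finset.eventually_all _).2 this] with u hu
  exact prod_congr rfl hu

theorem IntervalIntegrable.mul_jumpProd {f : ℝ → ℝ} {s t : ℝ}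
    (hf : IntervalIntegrable f volume s t) :
    IntervalIntegrable (fun u => f u * jumpProd τ γ n u) volume s t := by
  rw [intervalIntegrable_iff] at hf ⊢
  exact hf.mul_bdd measurable_jumpProd.aestronglyMeasurable
    (ae_of_all _ fun u => abs_jumpProd_le u)

theorem jumpProd_succ (t : ℝ) :
    jumpProd τ γ (n + 1) t = jumpProd τ γ n t * if τ n ≤ t then 1 + γ n else 1 :=
  prod_range_succ _ _

theorem jumpProdLeft_succ (t : ℝ) :
    jumpProdLeft τ γ (n + 1) t = jumpProdLeft τ γ n t * if τ n < t then 1 + γ n else 1 :=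
  prod_range_succ _ _

theorem jumpProd_eq_prod {t : ℝ} (ht : ∀ i < n, τ i ≤ t) :
    jumpProd τ γ n t = ∏ i ∈ range n, (1 + γ i) :=
  prod_congr rfl fun i hi => if_pos (ht i (mem_range.1 hi))

theorem jumpProdLeft_eq_prod {t : ℝ} (ht : ∀ i < n, τ i < t) :
    jumpProdLeft τ γ n t = ∏ i ∈ range n, (1 + γ i) :=
  prod_congr rfl fun i hi => if_pos (ht i (mem_range.1 hi))

theorem exp_mul_jumpProd_eq {a : ℝ → ℝ} (ha : ∀ s t, IntervalIntegrable a volume s t)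
    (hτ : StrictMono τ) (hτ0 : 0 < τ 0) (t : ℝ) :
    exp (∫ x in 0..t, a x) * jumpProd τ γ n t =
      1 + (∫ u in 0..t, a u * (exp (∫ x in 0..u, a x) * jumpProd τ γ n u)) +
        ∑ i ∈ range n, if τ i ≤ t then
          γ i * (exp (∫ x in 0..τ i, a x) * jumpProdLeft τ γ n (τ i)) else 0 := by
  set A : ℝ → ℝ := fun u => ∫ x in 0..u, a x
  induction n generalizing t with
  | zero =>
    simp only [jumpProd, jumpProdLeft, Finset.range_zero, Finset.prod_empty, Finset.sum_empty,
      mul_one, add_zero]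
    rw [integral_mul_exp_integral_eq_sub ha]
    simp
  | succ n ih =>
    have hτn : 0 < τ n := hτ0.trans_le (hτ.monotone (Nat.zero_le n))
    have hL : ∀ i ∈ range n, jumpProdLeft τ γ (n + 1) (τ i) = jumpProdLeft τ γ n (τ i) :=
      fun i hi => by
        rw [jumpProdLeft_succ, if_neg (not_lt.2 (hτ (mem_range.1 hi)).le), mul_one]
    have hLn : jumpProdLeft τ γ (n + 1) (τ n) = ∏ i ∈ range n, (1 + γ i) := by
      rw [jumpProdLeft_succ, if_neg (lt_irrefl _), mul_one, jumpProdLeft_eq_prod fun i hi => hτ hi]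
    rw [sum_range_succ, sum_congr rfl fun i hi => by rw [hL i hi], hLn]
    rcases lt_or_ge t (τ n) with htn | htn
    · have hbefore : ∀ u < τ n, jumpProd τ γ (n + 1) u = jumpProd τ γ n u := fun u hu => by
        rw [jumpProd_succ, if_neg (not_le.2 hu), mul_one]
      rw [hbefore t htn, if_neg (not_le.2 htn), add_zero, ih]
      congr 2
      refine integral_congr fun u hu => ?_
      rw [hbefore u (hu.2.trans_lt (max_lt hτn htn))]
    have hafter : ∀ u, τ n ≤ u → jumpProd τ γ (n + 1) u = (∏ i ∈ range n, (1 + γ i)) * (1 + γ n) :=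
      fun u hu => by
        rw [jumpProd_succ, if_pos hu, jumpProd_eq_prod fun i hi => (hτ hi).le.trans hu]
    have hint : ∀ s t, IntervalIntegrable
        (fun u => a u * (exp (A u) * jumpProd τ γ (n + 1) u)) volume s t := fun s t => by
      simpa only [mul_assoc] using
        ((ha s t).mul_continuousOn (continuous_primitive ha 0).rexp.continuousOn).mul_jumpProd
    have hint_before : ∫ u in 0..τ n, a u * (exp (A u) * jumpProd τ γ (n + 1) u) =
        ∫ u in 0..τ n, a u * (exp (A u) * jumpProd τ γ n u) := by
      refine integral_congr_ae ?_
      filter_upwards [Measure.ae_ne volume (τ n)] with u hne hu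
      rw [uIoc_of_le hτn.le] at hu
      rw [jumpProd_succ, if_neg (not_le.2 (lt_of_le_of_ne hu.2 hne)), mul_one]
    have hint_after : ∫ u in τ n..t, a u * (exp (A u) * jumpProd τ γ (n + 1) u) =
        (∏ i ∈ range n, (1 + γ i)) * (1 + γ n) * (exp (A t) - exp (A (τ n))) := by
      rw [← integral_mul_exp_integral_eq_sub ha, ← intervalIntegral.integral_const_mul]
      refine integral_congr fun u hu => ?_
      rw [uIcc_of_le htn] at hu
      rw [hafter u hu.1]
      ring
    have ihn := ih (τ n)
    rw [sum_congr rfl fun i hi => if_pos (hτ (mem_range.1 hi)).le,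
      jumpProd_eq_prod fun i hi => (hτ hi).le] at ihn
    rw [← integral_add_adjacent_intervals (hint 0 (τ n)) (hint (τ n) t), hint_before, hint_after,
      hafter t htn, if_pos htn,
      sum_congr rfl fun i hi => if_pos ((hτ (mem_range.1 hi)).le.trans htn)]
    linear_combination ihn

end jumpProd

theorem eqOn_map_iterate_of_causal {α : Type*} {Φ : (ℝ → α) → ℝ → α} {b c : ℝ}
    (hΦ : ∀ X X' c, EqOn X X' (Iic c) → EqOn (Φ X) (Φ X') (Iic (c + b)))
    {X₀ : ℝ → α} (h₀ : EqOn (Φ X₀) X₀ (Iic c)) (k : ℕ) :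
    EqOn (Φ (Φ^[k] X₀)) (Φ^[k] X₀) (Iic (c + k * b)) := by
  induction k with
  | zero => simpa using h₀
  | succ k ih =>
    rw [Function.iterate_succ_apply', Nat.cast_succ, add_one_mul, ← add_assoc]
    exact hΦ _ _ _ ih

noncomputable def delayMap (b : ℝ) (φ f g : ℝ → ℝ) (τ y : ℕ → ℝ) (n : ℕ) (X : ℝ → ℝ)
    (t : ℝ) : ℝ :=
  if t < 0 then φ t
  else φ 0 * (exp (∫ u in 0..t, f (X (u - b))) * jumpProd τ (fun i => g (X (τ i - b)) * y i) n t)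

section delayMap

variable {b C : ℝ} {φ f g : ℝ → ℝ} {τ y : ℕ → ℝ} {n : ℕ}

theorem delayMap_of_nonneg (X : ℝ → ℝ) {t : ℝ} (ht : 0 ≤ t) :
    delayMap b φ f g τ y n X t = φ 0 * (exp (∫ u in 0..t, f (X (u - b))) *
      jumpProd τ (fun i => g (X (τ i - b)) * y i) n t) :=
  if_neg (not_lt.2 ht)

theorem delayMap_eqOn_of_eqOn {X X' : ℝ → ℝ} {c : ℝ} (h : EqOn X X' (Iic c)) :
    EqOn (delayMap b φ f g τ y n X) (delayMap b φ f g τ y n X') (Iic (c + b)) := by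
  intro t (ht : t ≤ c + b)
  have hpast : ∀ u ≤ t, X (u - b) = X' (u - b) := fun u hu => h (show u - b ≤ c by linarith)
  unfold delayMap
  split_ifs with h0
  · rfl
  have hint : ∫ u in 0..t, f (X (u - b)) = ∫ u in 0..t, f (X' (u - b)) :=
    integral_congr fun u hu => by rw [hpast u (hu.2.trans (max_le (not_lt.1 h0) le_rfl))]
  have hprod : jumpProd τ (fun i => g (X (τ i - b)) * y i) n t =
      jumpProd τ (fun i => g (X' (τ i - b)) * y i) n t :=
    prod_congr rfl fun i _ => by split_ifs with hi; exacts [by simp only [hpast _ hi], rfl]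
  rw [hint, hprod]

theorem measurable_delayMap (hφ : Measurable φ) (hf : Measurable f) (hfC : ∀ x, |f x| ≤ C)
    {X : ℝ → ℝ} (hX : Measurable X) : Measurable (delayMap b φ f g τ y n X) := by
  have ha : ∀ s t, IntervalIntegrable (fun u => f (X (u - b))) volume s t :=
    intervalIntegrable_of_abs_le_s2 (hf.comp (hX.comp (measurable_id.sub_const b))) fun u => hfC _
  exact Measurable.ite measurableSet_Iio hφ
    (measurable_const.mul ((continuous_primitive ha 0).rexp.measurable.mul measurable_jumpProd))

theorem exists_measurable_eqOn_delayMap (hb : 0 < b) (hφ : Measurable φ) (hf : Measurable f)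
    (hfC : ∀ x, |f x| ≤ C) (T : ℝ) :
    ∃ S, Measurable S ∧ EqOn (delayMap b φ f g τ y n S) S (Iic T) := by
  obtain ⟨k, hk⟩ := exists_nat_ge ((T + 1) / b)
  rw [div_le_iff₀ hb] at hk
  refine ⟨(delayMap b φ f g τ y n)^[k] φ, ?_, ?_⟩
  · clear hk
    induction k with
    | zero => exact hφ
    | succ k ih =>
      rw [Function.iterate_succ_apply']
      exact measurable_delayMap hφ hf hfC ih
  · refine (eqOn_map_iterate_of_causal (c := -1) (fun X X' c => delayMap_eqOn_of_eqOn)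
      (fun t (ht : t ≤ -1) => if_pos (by linarith)) k).mono (Iic_subset_Iic.2 ?_)
    linarith

end delayMap

theorem tsum_ite_le_eq_sum {τ : ℕ → ℝ} {n : ℕ} {T t : ℝ} (hn : ∀ i, n ≤ i → T < τ i)
    (ht : t ≤ T) (c : ℕ → ℝ) :
    (∑' i, if τ i ≤ t then c i else 0) = ∑ i ∈ range n, if τ i ≤ t then c i else 0 :=
  tsum_eq_sum fun i hi => if_neg (not_le.2 (ht.trans_lt (hn i (by simpa using hi))))

theorem isSolution_of_eqOn_delayMap {b T C : ℝ} {φ f g : ℝ → ℝ} {τ y : ℕ → ℝ} {n : ℕ}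
    {S : ℝ → ℝ} (hT : 0 ≤ T) (hf : Measurable f) (hfC : ∀ x, |f x| ≤ C) (hSm : Measurable S)
    (hτ : StrictMono τ) (hτ0 : 0 < τ 0) (hn : ∀ i, n ≤ i → T < τ i)
    (hS : EqOn (delayMap b φ f g τ y n S) S (Iic T)) : IsSolution b T φ f g τ y S := by
  set a : ℝ → ℝ := fun u => f (S (u - b))
  set γ : ℕ → ℝ := fun i => g (S (τ i - b)) * y i
  have ha : ∀ s t, IntervalIntegrable a volume s t :=
    intervalIntegrable_of_abs_le_s2 (hf.comp (hSm.comp (measurable_id.sub_const b))) fun u => hfC _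
  have hτpos : ∀ i, 0 < τ i := fun i => hτ0.trans_le (hτ.monotone (Nat.zero_le i))
  have hSform : ∀ t ∈ Icc 0 T, S t = φ 0 * (exp (∫ x in 0..t, a x) * jumpProd τ γ n t) :=
    fun t ht => (hS ht.2).symm.trans (delayMap_of_nonneg S ht.1)
  refine ⟨fun t ht => ?_, fun i => φ 0 * (exp (∫ x in 0..τ i, a x) * jumpProdLeft τ γ n (τ i)),
    fun i hi => ?_, fun t ht => ?_⟩
  · rcases ht.2.lt_or_eq with h | rfl
    · exact (hS (h.le.trans hT)).symm.trans (if_pos h)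
    · rw [hSform 0 ⟨le_rfl, hT⟩, jumpProd_eq_one fun i _ => hτpos i]
      simp
  · have hleft : (fun u => φ 0 * (exp (∫ x in 0..u, a x) * jumpProdLeft τ γ n (τ i)))
        =ᶠ[𝓝[<] τ i] S := by
      filter_upwards [Ioo_mem_nhdsLT (hτpos i), jumpProd_eventuallyEq (γ := γ) (n := n) (τ i)]
        with u hu hP
      rw [hSform u ⟨hu.1.le, hu.2.le.trans hi⟩, hP]
    refine Tendsto.congr' hleft ?_
    exact ((continuous_const.mul ((continuous_primitive ha 0).rexp.mul continuous_const)).tendsto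
      (τ i)).mono_left nhdsWithin_le_nhds
  · have hint : ∫ u in 0..t, f (S (u - b)) * S u =
        φ 0 * ∫ u in 0..t, a u * (exp (∫ x in 0..u, a x) * jumpProd τ γ n u) := by
      rw [← intervalIntegral.integral_const_mul]
      refine integral_congr fun u hu => ?_
      rw [uIcc_of_le ht.1] at hu
      rw [hSform u ⟨hu.1, hu.2.trans ht.2⟩]
      ring
    rw [hSform t ht, exp_mul_jumpProd_eq ha hτ hτ0, hint, tsum_ite_le_eq_sum hn ht.2, mul_add,
      mul_add, mul_one, mul_sum]
    congr 1
    refine sum_congr rfl fun i _ => ?_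
    split_ifs
    · ring
    · simp

theorem exists_isSolution {b T C : ℝ} {φ f g : ℝ → ℝ} {τ y : ℕ → ℝ} (hb : 0 < b) (hT : 0 ≤ T)
    (hφ : Measurable φ) (hφ0 : 0 < φ 0) (hf : Measurable f) (hfC : ∀ x, |f x| ≤ C)
    (hτ : StrictMono τ) (hτ0 : 0 < τ 0) (hτtop : Tendsto τ atTop atTop)
    (hjump : ∀ x i, 0 < 1 + g x * y i) :
    ∃ S, Measurable S ∧ IsSolution b T φ f g τ y S ∧ ∀ t ∈ Icc 0 T, 0 < S t := by
  obtain ⟨n, hn⟩ := eventually_atTop.1 (hτtop.eventually_gt_atTop T)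
  obtain ⟨S, hSm, hS⟩ := exists_measurable_eqOn_delayMap (g := g) (τ := τ) (y := y) (n := n)
    hb hφ hf hfC T
  refine ⟨S, hSm, isSolution_of_eqOn_delayMap hT hf hfC hSm hτ hτ0 hn hS, fun t ht => ?_⟩
  rw [← hS ht.2, delayMap_of_nonneg S ht.1]
  exact mul_pos hφ0 (mul_pos (exp_pos _) (jumpProd_pos (fun i => hjump _ i) t))

theorem exists_gt_forall_le_imp_le {τ : ℕ → ℝ} (hτ : Tendsto τ atTop atTop) (x : ℝ) {δ : ℝ}
    (hδ : 0 < δ) : ∃ y, x < y ∧ y < x + δ ∧ ∀ i, τ i ≤ y → τ i ≤ x := by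
  obtain ⟨n, hn⟩ := eventually_atTop.1 (hτ.eventually_gt_atTop (x + δ))
  have hnear : ∀ i ∈ range n, ∀ᶠ y in 𝓝[>] x, τ i ≤ y → τ i ≤ x := by
    intro i _
    by_cases hi : τ i ≤ x
    · exact Eventually.of_forall fun _ _ => hi
    · filter_upwards [Ioo_mem_nhdsGT (not_le.1 hi)] with y hy h
      exact absurd h (not_le.2 hy.2)
  obtain ⟨y, hall, hy⟩ :=
    (((Finset.eventually_all _).2 hnear).and (Ioo_mem_nhdsGT (lt_add_of_pos_right x hδ))).exists
  refine ⟨y, hy.1, hy.2, fun i hi => ?_⟩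
  rcases lt_or_ge i n with h | h
  · exact hall i (mem_range.2 h) hi
  · exact absurd (hi.trans hy.2.le) (not_le.2 (hn i h))

theorem Icc_subset_of_forall_exists_Icc_subset {s : Set ℝ} {a T : ℝ}
    (h : ∀ x ∈ Icc a T, Ico a x ⊆ s → ∃ y > x, Icc x y ∩ Iic T ⊆ s) : Icc a T ⊆ s := by
  by_contra hsub
  obtain ⟨z, hz, hzs⟩ := not_subset.1 hsub
  set D := Icc a T \ s
  have hD : D.Nonempty := ⟨z, hz, hzs⟩
  have hbdd : BddBelow D := ⟨a, fun d hd => hd.1.1⟩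
  have hac : a ≤ sInf D := le_csInf hD fun d hd => hd.1.1
  have hcT : sInf D ≤ T := (csInf_le hbdd ⟨hz, hzs⟩).trans hz.2
  obtain ⟨y, hcy, hy⟩ := h (sInf D) ⟨hac, hcT⟩ fun u hu => by
    by_contra hus
    exact (csInf_le hbdd ⟨⟨hu.1, hu.2.le.trans hcT⟩, hus⟩).not_gt hu.2
  have : y ≤ sInf D := le_csInf hD fun d hd => by
    by_contra hdy
    exact hd.2 (hy ⟨⟨csInf_le hbdd hd, (not_le.1 hdy).le⟩, hd.1.2⟩)
  linarith

namespace IsSolution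

variable {b T C : ℝ} {φ f g : ℝ → ℝ} {τ y : ℕ → ℝ}

theorem intervalIntegrable {S : ℝ → ℝ} (hS : IsSolution b T φ f g τ y S) (hSm : Measurable S)
    (hf : Measurable f) (hfC : ∀ x, |f x| ≤ C) (hτ : Tendsto τ atTop atTop) (hT : 0 ≤ T) :
    IntervalIntegrable (fun u => f (S (u - b)) * S u) volume 0 T := by
  obtain ⟨-, Sm, -, heq⟩ := hS
  obtain ⟨n, hn⟩ := eventually_atTop.1 (hτ.eventually_gt_atTop T)
  set h : ℝ → ℝ := fun u => f (S (u - b)) * S u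
  set J : ℝ → ℝ := fun t => ∑' i, if τ i ≤ t then g (S (τ i - b)) * y i * Sm i else 0
  have hhm : Measurable h := (hf.comp (hSm.comp (measurable_id.sub_const b))).mul hSm
  have hC : 0 ≤ C := (abs_nonneg _).trans (hfC 0)
  set B := |φ 0| + ∑ i ∈ range n, |g (S (τ i - b)) * y i * Sm i|
  have habs : IntervalIntegrable (fun u => |h u|) volume 0 T := by
    refine intervalIntegrable_of_le_add_integral (A := C * B) hhm.abs hC hT
      (fun u _ => abs_nonneg _) fun u hu => ?_
    have hJ : |J u| ≤ ∑ i ∈ range n, |g (S (τ i - b)) * y i * Sm i| := by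
      simp only [J]
      rw [tsum_ite_le_eq_sum hn hu.2]
      exact (abs_sum_le_sum_abs _ _).trans
        (sum_le_sum fun i _ => by split_ifs <;> simp only [abs_zero, le_refl, abs_nonneg])
    have hSu : |S u| ≤ B + ∫ r in 0..u, |h r| := by
      rw [heq u hu]
      have := abs_integral_le_integral_abs (f := h) (μ := volume) hu.1
      calc _ ≤ |φ 0| + |∫ r in 0..u, h r| + |J u| := abs_add_three _ _ _
        _ ≤ B + ∫ r in 0..u, |h r| := by linarith
    calc |h u| = |f (S (u - b))| * |S u| := abs_mul _ _
      _ ≤ C * (B + ∫ r in 0..u, |h r|) := mul_le_mul (hfC _) hSu (abs_nonneg _) hC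
      _ = C * B + C * ∫ r in 0..u, |h r| := mul_add _ _ _
  exact (IntervalIntegrable.intervalIntegrable_norm_iff hhm.aestronglyMeasurable).1 habs

theorem exists_eqOn_of_eqOn_Ico {S₁ S₂ : ℝ → ℝ} (hb : 0 < b) (hf : Measurable f)
    (hfC : ∀ x, |f x| ≤ C) (hτ0 : ∀ i, 0 ≤ τ i) (hτ : Tendsto τ atTop atTop)
    (hS₁ : IsSolution b T φ f g τ y S₁) (hS₁m : Measurable S₁)
    (hS₂ : IsSolution b T φ f g τ y S₂) (hS₂m : Measurable S₂) {x : ℝ} (hx : -b ≤ x)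
    (hpast : EqOn S₁ S₂ (Ico (-b) x)) : ∃ z > x, EqOn S₁ S₂ (Icc x z ∩ Iic T) := by
  obtain ⟨Sm₁, hlim₁, heq₁⟩ := hS₁.2
  obtain ⟨Sm₂, hlim₂, heq₂⟩ := hS₂.2
  -- up to time `z`, delayed arguments and jumps only involve times before `x`
  obtain ⟨z, hxz, hzb, hgap⟩ := exists_gt_forall_le_imp_le hτ x hb
  refine ⟨z, hxz, fun t ht => ?_⟩
  rcases lt_or_ge t 0 with ht0 | ht0
  · rw [hS₁.1 t ⟨hx.trans ht.1.1, ht0.le⟩, hS₂.1 t ⟨hx.trans ht.1.1, ht0.le⟩]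
  have hT : 0 ≤ T := ht0.trans ht.2
  have hSm : ∀ i, τ i ≤ x → τ i ≤ T → Sm₁ i = Sm₂ i := fun i hi hiT => by
    refine tendsto_nhds_unique ((hlim₁ i hiT).congr' ?_) (hlim₂ i hiT)
    filter_upwards [Ioo_mem_nhdsLT (sub_lt_self (τ i) hb)] with u hu
    exact hpast ⟨by linarith [hτ0 i, hu.1], hu.2.trans_le hi⟩
  have hJ : ∀ u ∈ Icc 0 t,
      (∑' i, if τ i ≤ u then g (S₁ (τ i - b)) * y i * Sm₁ i else 0) =
        ∑' i, if τ i ≤ u then g (S₂ (τ i - b)) * y i * Sm₂ i else 0 := fun u hu =>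
    tsum_congr fun i => by
      split_ifs with hi
      · have hix := hgap i (hi.trans (hu.2.trans ht.1.2))
        rw [hpast ⟨by linarith [hτ0 i], by linarith⟩, hSm i hix (hi.trans (hu.2.trans ht.2))]
      · rfl
  have hdelay : ∀ u ∈ Icc 0 t, f (S₁ (u - b)) = f (S₂ (u - b)) := fun u hu => by
    rw [hpast ⟨by linarith [hu.1], by linarith [hu.2, ht.1.2]⟩]
  set h₁ : ℝ → ℝ := fun u => f (S₁ (u - b)) * S₁ u
  set h₂ : ℝ → ℝ := fun u => f (S₂ (u - b)) * S₂ u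
  have hsub : uIcc 0 t ⊆ uIcc 0 T := by
    rw [uIcc_of_le ht0, uIcc_of_le hT]; exact Icc_subset_Icc_right ht.2
  have hi₁ : IntervalIntegrable h₁ volume 0 t :=
    (hS₁.intervalIntegrable hS₁m hf hfC hτ hT).mono_set hsub
  have hi₂ : IntervalIntegrable h₂ volume 0 t :=
    (hS₂.intervalIntegrable hS₂m hf hfC hτ hT).mono_set hsub
  have hdiff : ∀ u ∈ Icc 0 t, S₁ u - S₂ u = ∫ r in 0..u, (h₁ r - h₂ r) := fun u hu => by
    have hsub' : uIcc 0 u ⊆ uIcc 0 t := by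
      rw [uIcc_of_le hu.1, uIcc_of_le ht0]; exact Icc_subset_Icc_right hu.2
    rw [heq₁ u ⟨hu.1, hu.2.trans ht.2⟩, heq₂ u ⟨hu.1, hu.2.trans ht.2⟩, hJ u hu,
      intervalIntegral.integral_sub (hi₁.mono_set hsub') (hi₂.mono_set hsub')]
    ring
  rw [← sub_eq_zero]
  refine eq_zero_of_eq_integral (D := fun u => S₁ u - S₂ u) ((abs_nonneg _).trans (hfC 0)) ht0
    (hi₁.sub hi₂) hdiff fun u hu => ?_
  simp only [h₁, h₂, hdelay u hu, ← mul_sub, abs_mul]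
  exact mul_le_mul_of_nonneg_right (hfC _) (abs_nonneg _)

theorem eqOn {S₁ S₂ : ℝ → ℝ} (hb : 0 < b) (hf : Measurable f) (hfC : ∀ x, |f x| ≤ C)
    (hτ0 : ∀ i, 0 ≤ τ i) (hτ : Tendsto τ atTop atTop)
    (hS₁ : IsSolution b T φ f g τ y S₁) (hS₁m : Measurable S₁)
    (hS₂ : IsSolution b T φ f g τ y S₂) (hS₂m : Measurable S₂) : EqOn S₁ S₂ (Icc (-b) T) :=
  Icc_subset_of_forall_exists_Icc_subset fun _ hx hpast =>
    exists_eqOn_of_eqOn_Ico hb hf hfC hτ0 hτ hS₁ hS₁m hS₂ hS₂m hx.1 hpast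

end IsSolution

theorem one_add_mul_pos {R α c y : ℝ} (hR : 0 < R) (hα : α < 1) (hc : 0 ≤ c ∧ c ≤ α / R)
    (hy : -R ≤ y) : 0 < 1 + c * y := by
  have : c * R ≤ α := (le_div_iff₀ hR).1 hc.2
  nlinarith [hc.1]

theorem ae_notMem_of_map_eq_withDensity {Ω β : Type*} [MeasurableSpace Ω] [MeasurableSpace β]
    {P : Measure Ω} {μ : Measure β} {X : Ω → β} (hX : Measurable X) {d : β → ℝ≥0∞}
    (hmap : P.map X = μ.withDensity d) {s : Set β} (hs : MeasurableSet s)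
    (hd : ∀ᵐ x ∂μ, x ∈ s → d x = 0) : ∀ᵐ ω ∂P, X ω ∉ s := by
  have : P (X ⁻¹' s) = 0 := by
    rw [← Measure.map_apply hX hs, hmap, withDensity_apply _ hs]
    exact (lintegral_congr_ae ((ae_restrict_iff' hs).2 hd)).trans lintegral_zero
  exact measure_eq_zero_iff_ae_notMem.1 this

theorem ae_tendsto_sum_atTop {Ω : Type*} [MeasurableSpace Ω] {P : Measure Ω}
    [IsProbabilityMeasure P] {X : ℕ → Ω → ℝ} (hX : ∀ i, Measurable (X i))
    (hindep : Pairwise fun i j => X i ⟂ᵢ[P] X j) (hident : ∀ i, IdentDistrib (X i) (X 0) P P)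
    (hpos : ∀ᵐ ω ∂P, 0 < X 0 ω) :
    ∀ᵐ ω ∂P, Tendsto (fun n => ∑ i ∈ range n, X i ω) atTop atTop := by
  set Z : ℕ → Ω → ℝ := fun i ω => min (X i ω) 1
  have hmin : Measurable fun x : ℝ => min x 1 := measurable_id.min measurable_const
  have hZpos : ∀ᵐ ω ∂P, 0 < Z 0 ω := hpos.mono fun ω hω => lt_min hω one_pos
  have hZint : Integrable (Z 0) P :=
    Integrable.of_bound (hmin.comp (hX 0)).aestronglyMeasurable 1 <| hZpos.mono fun ω hω => by
      rw [norm_of_nonneg hω.le]; exact min_le_right _ _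
  have hmean : 0 < P[Z 0] := by
    rw [integral_pos_iff_support_of_nonneg_ae (hZpos.mono fun ω hω => hω.le) hZint]
    refine pos_iff_ne_zero.2 fun h0 => ?_
    have : ∀ᵐ ω ∂P, False := by
      filter_upwards [measure_eq_zero_iff_ae_notMem.1 h0, hZpos] with ω h1 h2
      exact h1 h2.ne'
    exact NeZero.ne P (by simpa using this)
  have hslln := strong_law_ae_real Z hZint (fun i j hij => (hindep hij).comp hmin hmin)
    fun i => (hident i).comp hmin
  filter_upwards [hslln] with ω hω
  have hZsum : Tendsto (fun n => ∑ i ∈ range n, Z i ω) atTop atTop := by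
    refine (tendsto_natCast_atTop_atTop.atTop_mul_pos hmean hω).congr' ?_
    filter_upwards [eventually_ne_atTop 0] with n hn
    exact mul_div_cancel₀ _ (Nat.cast_ne_zero.2 hn)
  exact tendsto_atTop_mono (fun n => sum_le_sum fun i _ => min_le_left _ _) hZsum

theorem stmt_2_general {Ω : Type*} [MeasurableSpace Ω] (P : Measure Ω) [IsProbabilityMeasure P]
    (lam R T b α₀ : ℝ) (hR : 0 < R) (hT : 0 < T) (hb : 0 < b)
    (hα₁ : α₀ < 1)
    (E Y : ℕ → Ω → ℝ)
    (hEmeas : ∀ i, Measurable (E i)) (hYmeas : ∀ i, Measurable (Y i))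
    (hindep : iIndepFun (Sum.elim E Y) P)
    (hE : ∀ i, Measure.map (E i) P
      = (volume : Measure ℝ).withDensity
          (fun x => ENNReal.ofReal (if 0 ≤ x then lam * Real.exp (-(lam * x)) else 0)))
    (fY : ℝ → ℝ)
    (hfYsupp : ∀ z < -R, fY z = 0)
    (hY : ∀ i, Measure.map (Y i) P
      = (volume : Measure ℝ).withDensity (fun z => ENNReal.ofReal (fY z)))
    (φ f g : ℝ → ℝ) (hφm : Measurable φ)
    (hφ0 : 0 < φ 0)
    (hfm : Measurable f) (hfb : ∃ C, ∀ x, |f x| ≤ C)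
    (hgb : ∀ x, 0 ≤ g x ∧ g x ≤ α₀ / R) :
    ∀ᵐ ω ∂P, ∃ S : ℝ → ℝ,
      (Measurable S ∧
        IsSolution b T φ f g (fun i => ∑ j ∈ Finset.range (i + 1), E j ω)
          (fun i => Y i ω) S) ∧
      (∀ t ∈ Set.Icc (0 : ℝ) T, 0 < S t) ∧
      (∀ S' : ℝ → ℝ, Measurable S' →
        IsSolution b T φ f g (fun i => ∑ j ∈ Finset.range (i + 1), E j ω)
          (fun i => Y i ω) S' →
        Set.EqOn S' S (Set.Icc (-b) T)) := by
  obtain ⟨C, hfC⟩ := hfb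
  have hEpos : ∀ i, ∀ᵐ ω ∂P, 0 < E i ω := fun i =>
    (ae_notMem_of_map_eq_withDensity (hEmeas i) (hE i) measurableSet_Iic <| by
      filter_upwards [Measure.ae_ne volume 0] with x hx0 hx
      rw [if_neg fun h => hx0 (le_antisymm hx h), ENNReal.ofReal_zero]).mono fun _ h => not_le.1 h
  have hYge : ∀ i, ∀ᵐ ω ∂P, -R ≤ Y i ω := fun i =>
    (ae_notMem_of_map_eq_withDensity (hYmeas i) (hY i) measurableSet_Iio <|
      ae_of_all _ fun z hz => by rw [hfYsupp z hz, ENNReal.ofReal_zero]).mono fun _ h => not_lt.1 h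
  have hsum := ae_tendsto_sum_atTop hEmeas
    (fun i j hij => (hindep.precomp Sum.inl_injective).indepFun hij)
    (fun i => ⟨(hEmeas i).aemeasurable, (hEmeas 0).aemeasurable, (hE i).trans (hE 0).symm⟩)
    (hEpos 0)
  filter_upwards [ae_all_iff.2 hEpos, ae_all_iff.2 hYge, hsum] with ω hEω hYω hsumω
  set τ : ℕ → ℝ := fun i => ∑ j ∈ range (i + 1), E j ω
  have hτ : StrictMono τ := strictMono_nat_of_lt_succ fun i => by
    simpa [τ, sum_range_succ _ (i + 1)] using hEω (i + 1)
  have hτ0 : 0 < τ 0 := by simpa [τ] using hEω 0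
  have hτtop : Tendsto τ atTop atTop := hsumω.comp (tendsto_add_atTop_nat 1)
  have hτpos : ∀ i, 0 ≤ τ i := fun i => (hτ0.trans_le (hτ.monotone (Nat.zero_le i))).le
  obtain ⟨S, hSm, hS, hSpos⟩ := exists_isSolution hb hT.le hφm hφ0 hfm hfC hτ hτ0 hτtop
    fun x i => one_add_mul_pos hR hα₁ (hgb x) (hYω i)
  exact ⟨S, ⟨hSm, hS⟩, hSpos, fun S' hS'm hS' =>
    hS'.eqOn hb hfm hfC hτpos hτtop hS'm hS hSm⟩

/-- Almost sure existence, uniqueness and positivity of the solution of the delayed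
jump equation driven by the compound Poisson process `Z(t) = ∑_{i ≤ N_t} Y_i`. -/
theorem stmt_2 {Ω : Type*} [MeasurableSpace Ω] (P : Measure Ω) [IsProbabilityMeasure P]
    (lam R T b α₀ : ℝ) (hlam : 0 < lam) (hR : 0 < R) (hT : 0 < T) (hb : 0 < b)
    (hα₀ : 0 < α₀) (hα₁ : α₀ < 1)
    (E Y : ℕ → Ω → ℝ)
    (hEmeas : ∀ i, Measurable (E i)) (hYmeas : ∀ i, Measurable (Y i))
    (hindep : iIndepFun (Sum.elim E Y) P)
    (hE : ∀ i, Measure.map (E i) P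
      = (volume : Measure ℝ).withDensity
          (fun x => ENNReal.ofReal (if 0 ≤ x then lam * Real.exp (-(lam * x)) else 0)))
    (fY : ℝ → ℝ) (hfYmeas : Measurable fY) (hfYpos : ∀ z, 0 ≤ fY z)
    (hfYint : (∫ z, fY z) = 1) (hfYsupp : ∀ z < -R, fY z = 0)
    (hY : ∀ i, Measure.map (Y i) P
      = (volume : Measure ℝ).withDensity (fun z => ENNReal.ofReal (fY z)))
    (φ f g : ℝ → ℝ) (hφm : Measurable φ)
    (hφb : ∃ C, ∀ t ∈ Set.Icc (-b) (0 : ℝ), |φ t| ≤ C) (hφ0 : 0 < φ 0)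
    (hfm : Measurable f) (hfb : ∃ C, ∀ x, |f x| ≤ C)
    (hgm : Measurable g) (hgb : ∀ x, 0 ≤ g x ∧ g x ≤ α₀ / R) :
    ∀ᵐ ω ∂P, ∃ S : ℝ → ℝ,
      (Measurable S ∧
        IsSolution b T φ f g (fun i => ∑ j ∈ Finset.range (i + 1), E j ω)
          (fun i => Y i ω) S) ∧
      (∀ t ∈ Set.Icc (0 : ℝ) T, 0 < S t) ∧
      (∀ S' : ℝ → ℝ, Measurable S' →
        IsSolution b T φ f g (fun i => ∑ j ∈ Finset.range (i + 1), E j ω)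
          (fun i => Y i ω) S' →
        Set.EqOn S' S (Set.Icc (-b) T)) :=
  stmt_2_general P lam R T b α₀ hR hT hb hα₁ E Y hEmeas hYmeas hindep hE fY hfYsupp hY φ f g hφm hφ0
    hfm hfb hgb
end
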